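/- arXiv:math/0207026 — 3 statements merged into one kernel-verified Lean document; each statement's English description precedes it below -/
import Mathlib

section
/- Let A : ℝⁿ → Matrix n n ℝ be continuous with A(0) = A₀, where all eigenvalues of A₀ have positive real part, and let B₀ solve A₀ᵀB₀ + B₀A₀ = I. Then there exist δ > 0 and C > 0 such that for every solution x(t) of ẋ = A(x(t))·x(t) remaining in the ball {‖x‖₀ ≤ δ}, the function t ↦ ‖x(t)‖₀² is nondecreasing, and moreover d/dt ‖x(t)‖₀² ≥ C‖x(t)‖². -/
open Matrix


lemma quad_abs_bound {n : ℕ} (M : Matrix (Fin n) (Fin n) ℝ) (v : Fin n → ℝ) :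
    |(M *ᵥ v) ⬝ᵥ v| ≤ (∑ i, ∑ j, |M i j|) * (v ⬝ᵥ v) := by
  have hvv : ∀ i j, |v i| * |v j| ≤ v ⬝ᵥ v := by
    intro i j
    have hi : v i * v i ≤ v ⬝ᵥ v :=
      Finset.single_le_sum (fun k _ => mul_self_nonneg (v k)) (Finset.mem_univ i)
    have hj : v j * v j ≤ v ⬝ᵥ v :=
      Finset.single_le_sum (fun k _ => mul_self_nonneg (v k)) (Finset.mem_univ j)
    nlinarith [sq_nonneg (|v i| - |v j|), abs_mul_abs_self (v i), abs_mul_abs_self (v j)]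
  have h0 : (M *ᵥ v) ⬝ᵥ v = ∑ i, (∑ j, M i j * v j) * v i := by
    simp [mulVec, dotProduct]
  rw [h0]
  calc |∑ i, (∑ j, M i j * v j) * v i| ≤ ∑ i, |(∑ j, M i j * v j) * v i| :=
        Finset.abs_sum_le_sum_abs _ _
    _ ≤ ∑ i, ∑ j, |M i j| * (v ⬝ᵥ v) := by
        refine Finset.sum_le_sum fun i _ => ?_
        rw [abs_mul]
        calc |∑ j, M i j * v j| * |v i| ≤ (∑ j, |M i j * v j|) * |v i| := by
              have := Finset.abs_sum_le_sum_abs (fun j => M i j * v j) Finset.univ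
              exact mul_le_mul_of_nonneg_right this (abs_nonneg _)
          _ = ∑ j, |M i j| * (|v j| * |v i|) := by
              rw [Finset.sum_mul]
              refine Finset.sum_congr rfl fun j _ => by rw [abs_mul, mul_assoc]
          _ ≤ ∑ j, |M i j| * (v ⬝ᵥ v) :=
              Finset.sum_le_sum fun j _ =>
                mul_le_mul_of_nonneg_left (hvv j i) (abs_nonneg _)
    _ = (∑ i, ∑ j, |M i j|) * (v ⬝ᵥ v) := by
        rw [Finset.sum_mul]
        exact Finset.sum_congr rfl fun i _ => by rw [Finset.sum_mul]

lemma posdef_lower {n : ℕ} (B : Matrix (Fin n) (Fin n) ℝ) (hB : B.PosDef) :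
    ∃ m > (0:ℝ), ∀ y : Fin n → ℝ, m * (y ⬝ᵥ y) ≤ (B *ᵥ y) ⬝ᵥ y := by
  obtain rfl | hn := Nat.eq_zero_or_pos n
  · exact ⟨1, one_pos, fun y => by simp [Subsingleton.elim y 0]⟩
  have hdotc : Continuous fun v : Fin n → ℝ => v ⬝ᵥ v :=
    continuous_finset_sum _ fun i _ => (continuous_apply i).mul (continuous_apply i)
  have hqc : Continuous fun v : Fin n → ℝ => (B *ᵥ v) ⬝ᵥ v := by
    have h : (fun v : Fin n → ℝ => (B *ᵥ v) ⬝ᵥ v)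
        = fun v => ∑ i, (∑ j, B i j * v j) * v i := by
      funext v; simp [mulVec, dotProduct]
    rw [h]
    exact continuous_finset_sum _ fun i _ =>
      (continuous_finset_sum _ fun j _ => continuous_const.mul (continuous_apply j)).mul
        (continuous_apply i)
  set S : Set (Fin n → ℝ) := {v | v ⬝ᵥ v = 1} with hS
  have hclosed : IsClosed S := isClosed_eq hdotc continuous_const
  have hsub : S ⊆ Metric.closedBall 0 1 := by
    intro v hv
    rw [Metric.mem_closedBall, dist_zero_right]
    rw [pi_norm_le_iff_of_nonneg zero_le_one]
    intro i
    have hi : v i * v i ≤ v ⬝ᵥ v :=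
      Finset.single_le_sum (fun k _ => mul_self_nonneg (v k)) (Finset.mem_univ i)
    rw [hv] at hi
    rw [Real.norm_eq_abs]
    nlinarith [abs_nonneg (v i), abs_mul_abs_self (v i)]
  have hcomp : IsCompact S :=
    (isCompact_closedBall (0 : Fin n → ℝ) 1).of_isClosed_subset hclosed hsub
  have hne : S.Nonempty := by
    refine ⟨Pi.single ⟨0, hn⟩ 1, ?_⟩
    simp [hS, dotProduct, Pi.single_apply]
  obtain ⟨u, huS, hmin⟩ := hcomp.exists_isMinOn hne hqc.continuousOn
  have hu1 : u ⬝ᵥ u = 1 := huS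
  have hu0 : u ≠ 0 := by
    intro h; rw [h] at hu1; simp at hu1
  have hm : 0 < (B *ᵥ u) ⬝ᵥ u := by
    have := hB.dotProduct_mulVec_pos hu0
    simpa [dotProduct_comm] using this
  refine ⟨_, hm, fun y => ?_⟩
  by_cases hy : y = 0
  · simp [hy]
  have hyy : 0 < y ⬝ᵥ y := by
    rcases Function.ne_iff.mp hy with ⟨i, hi⟩
    refine Finset.sum_pos' (fun k _ => mul_self_nonneg (y k)) ⟨i, Finset.mem_univ i, ?_⟩
    simpa using mul_self_pos.mpr hi
  set r := Real.sqrt (y ⬝ᵥ y) with hr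
  have hrpos : 0 < r := Real.sqrt_pos.mpr hyy
  have hr2 : r * r = y ⬝ᵥ y := Real.mul_self_sqrt hyy.le
  have huy : (r⁻¹ • y) ∈ S := by
    show (r⁻¹ • y) ⬝ᵥ (r⁻¹ • y) = 1
    rw [smul_dotProduct, dotProduct_smul]
    simp only [smul_eq_mul]
    field_simp
    nlinarith
  have hle : (B *ᵥ u) ⬝ᵥ u ≤ (B *ᵥ (r⁻¹ • y)) ⬝ᵥ (r⁻¹ • y) := hmin huy
  have hBq : (B *ᵥ (r⁻¹ • y)) ⬝ᵥ (r⁻¹ • y) = r⁻¹ * r⁻¹ * ((B *ᵥ y) ⬝ᵥ y) := by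
    rw [mulVec_smul, smul_dotProduct, dotProduct_smul]
    simp [smul_eq_mul]; ring
  rw [hBq] at hle
  have h2 : (B *ᵥ u) ⬝ᵥ u * (r * r) ≤ r⁻¹ * r⁻¹ * ((B *ᵥ y) ⬝ᵥ y) * (r * r) :=
    mul_le_mul_of_nonneg_right hle (by positivity)
  calc (B *ᵥ u) ⬝ᵥ u * (y ⬝ᵥ y) = (B *ᵥ u) ⬝ᵥ u * (r * r) := by rw [hr2]
    _ ≤ r⁻¹ * r⁻¹ * ((B *ᵥ y) ⬝ᵥ y) * (r * r) := h2
    _ = (B *ᵥ y) ⬝ᵥ y := by field_simp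


lemma hasDerivAt_quad {n : ℕ} (B : Matrix (Fin n) (Fin n) ℝ) (x : ℝ → Fin n → ℝ)
    (v : Fin n → ℝ) (t : ℝ) (hx : HasDerivAt x v t) :
    HasDerivAt (fun s => (B *ᵥ x s) ⬝ᵥ x s) ((B *ᵥ v) ⬝ᵥ x t + (B *ᵥ x t) ⬝ᵥ v) t := by
  have hxi : ∀ i, HasDerivAt (fun s => x s i) (v i) t := fun i => hasDerivAt_pi.mp hx i
  have h1 : ∀ i, HasDerivAt (fun s => (∑ j, B i j * x s j) * x s i)
      ((∑ j, B i j * v j) * x t i + (∑ j, B i j * x t j) * v i) t := fun i =>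
    (HasDerivAt.fun_sum fun j _ => (hxi j).const_mul (B i j)).mul (hxi i)
  have hsum := HasDerivAt.fun_sum (fun i (_ : i ∈ Finset.univ) => h1 i)
  have heq : (fun s => (B *ᵥ x s) ⬝ᵥ x s)
      = fun s => ∑ i, (∑ j, B i j * x s j) * x s i := by
    funext s; simp [mulVec, dotProduct]
  have hval : (B *ᵥ v) ⬝ᵥ x t + (B *ᵥ x t) ⬝ᵥ v
      = ∑ i, ((∑ j, B i j * v j) * x t i + (∑ j, B i j * x t j) * v i) := by
    simp [mulVec, dotProduct, Finset.sum_add_distrib]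
  rw [heq, hval]
  exact hsum

lemma quad_identity {n : ℕ} (B M : Matrix (Fin n) (Fin n) ℝ) (y : Fin n → ℝ) :
    (B *ᵥ (M *ᵥ y)) ⬝ᵥ y + (B *ᵥ y) ⬝ᵥ (M *ᵥ y) = ((Mᵀ * B + B * M) *ᵥ y) ⬝ᵥ y := by
  rw [add_mulVec, add_dotProduct, ← mulVec_mulVec, ← mulVec_mulVec, mulVec_transpose,
    ← dotProduct_mulVec, dotProduct_comm]
  ring

/-- Near a matrix `A₀` with spectrum in the right half plane, solutions of the
nonlinear system `ẋ = A(x)x` staying in a small ball for the Lyapunov norm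
`‖x‖₀² = ⟨B₀x,x⟩` have `‖x(t)‖₀²` nondecreasing, with `d/dt ‖x(t)‖₀² ≥ C‖x(t)‖²`. -/
theorem lyapunov_monotonicity (n : ℕ)
    (A : (Fin n → ℝ) → Matrix (Fin n) (Fin n) ℝ) (hA : Continuous A)
    (A₀ B₀ : Matrix (Fin n) (Fin n) ℝ) (hA0 : A 0 = A₀)
    (hspec : ∀ μ ∈ spectrum ℂ (A₀.map Complex.ofReal), 0 < μ.re)
    (hsymm : B₀.IsSymm) (hpos : B₀.PosDef)
    (hlyap : A₀ᵀ * B₀ + B₀ * A₀ = 1) :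
    ∃ δ > (0:ℝ), ∃ C > (0:ℝ), ∀ x : ℝ → (Fin n → ℝ),
      (∀ t, HasDerivAt x (A (x t) *ᵥ x t) t) →
      (∀ t, (B₀ *ᵥ x t) ⬝ᵥ x t ≤ δ ^ 2) →
      Monotone (fun t => (B₀ *ᵥ x t) ⬝ᵥ x t) ∧
      ∀ t, ∃ d : ℝ, HasDerivAt (fun s => (B₀ *ᵥ x s) ⬝ᵥ x s) d t ∧
        C * (x t ⬝ᵥ x t) ≤ d := by
  obtain ⟨m, hm, hmle⟩ := posdef_lower B₀ hpos
  set f : (Fin n → ℝ) → Matrix (Fin n) (Fin n) ℝ := fun y => (A y)ᵀ * B₀ + B₀ * A y with hf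
  have hfc : Continuous f :=
    (hA.matrix_transpose.matrix_mul continuous_const).add (continuous_const.matrix_mul hA)
  set g : (Fin n → ℝ) → ℝ := fun y => ∑ i, ∑ j, |(f y - 1) i j| with hgdef
  have hgc : Continuous g := by
    refine continuous_finset_sum _ fun i _ => continuous_finset_sum _ fun j _ => ?_
    exact ((hfc.sub continuous_const).matrix_elem i j).abs
  have hf0 : f 0 = 1 := by rw [hf]; dsimp only; rw [hA0]; exact hlyap
  have hg0 : g 0 = 0 := by simp [hgdef, hf0]
  obtain ⟨ε, hε, hball⟩ := Metric.continuousAt_iff.mp hgc.continuousAt (1/2) (by norm_num)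
  rw [hg0] at hball
  refine ⟨Real.sqrt m * (ε / 2), by positivity, 1/2, by norm_num, fun x hx hballx => ?_⟩
  have key : ∀ t, HasDerivAt (fun s => (B₀ *ᵥ x s) ⬝ᵥ x s) ((f (x t) *ᵥ x t) ⬝ᵥ x t) t := by
    intro t
    have := hasDerivAt_quad B₀ x (A (x t) *ᵥ x t) t (hx t)
    rwa [quad_identity] at this
  have hest : ∀ t, 1/2 * (x t ⬝ᵥ x t) ≤ (f (x t) *ᵥ x t) ⬝ᵥ x t := by
    intro t
    set y := x t with hy
    have hyynn : 0 ≤ y ⬝ᵥ y := Finset.sum_nonneg fun k _ => mul_self_nonneg (y k)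
    have h1 : (B₀ *ᵥ y) ⬝ᵥ y ≤ (Real.sqrt m * (ε / 2)) ^ 2 := hballx t
    have hs : (Real.sqrt m * (ε / 2)) ^ 2 = m * (ε / 2) ^ 2 := by
      rw [mul_pow, Real.sq_sqrt hm.le]
    have hyy : y ⬝ᵥ y ≤ (ε / 2) ^ 2 := by nlinarith [hmle y]
    have hnorm : dist y 0 < ε := by
      rw [dist_zero_right]
      have h2 : ‖y‖ ≤ ε / 2 := by
        rw [pi_norm_le_iff_of_nonneg (by positivity)]
        intro i
        have hi : y i * y i ≤ y ⬝ᵥ y :=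
          Finset.single_le_sum (fun k _ => mul_self_nonneg (y k)) (Finset.mem_univ i)
        rw [Real.norm_eq_abs]
        nlinarith [abs_nonneg (y i), abs_mul_abs_self (y i)]
      linarith
    have hgy : g y < 1/2 := by
      have := hball hnorm
      rw [Real.dist_eq, sub_zero] at this
      exact lt_of_le_of_lt (le_abs_self _) this
    have habs := quad_abs_bound (f y - 1) y
    have hsplit : (f y *ᵥ y) ⬝ᵥ y = y ⬝ᵥ y + ((f y - 1) *ᵥ y) ⬝ᵥ y := by
      rw [sub_mulVec, sub_dotProduct, one_mulVec]
      ring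
    have hb : |((f y - 1) *ᵥ y) ⬝ᵥ y| ≤ 1/2 * (y ⬝ᵥ y) := by
      refine habs.trans ?_
      exact mul_le_mul_of_nonneg_right hgy.le hyynn
    have := abs_le.mp hb
    linarith [hsplit, this.1]
  refine ⟨?_, fun t => ⟨_, key t, hest t⟩⟩
  exact monotone_of_hasDerivAt_nonneg key fun t => by
    show (0:ℝ) ≤ f (x t) *ᵥ x t ⬝ᵥ x t
    have h := hest t
    have : 0 ≤ x t ⬝ᵥ x t := Finset.sum_nonneg fun k _ => mul_self_nonneg (x t k)
    linarith
end

section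
/- Let X be a smooth vector field on ℝᵐ with flow κ_t, and suppose ρ₀ is a fixed point with X(ρ₀) = 0. Suppose g : ℝᵐ → ℝ is smooth, supported where the flow converges to ρ₀ as t → -∞ with exponential rate: ‖κ_t(ρ) - ρ₀‖ ≤ C e^{λt}‖ρ - ρ₀‖ for t ≤ 0 and some λ > 0, and g vanishes to infinite order at ρ₀ (all derivatives vanish). Then for each ρ in this region, the integral f(ρ) = ∫_{-∞}^0 g(κ_t(ρ)) dt converges absolutely, f is continuous, f(ρ₀) = 0, and X·f = g (the derivative of f along X equals g). -/
open MeasureTheory Set Metric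

private lemma hom_aux_lip {E F : Type*} [NormedAddCommGroup E] [NormedSpace ℝ E]
    [ProperSpace E] [NormedAddCommGroup F] [NormedSpace ℝ F]
    {f : E → F} (hf : ContDiff ℝ (⊤ : ℕ∞) f) (c : E) (R : ℝ) :
    ∃ K : NNReal, LipschitzOnWith K f (closedBall c R) := by
  have hd : Differentiable ℝ f := hf.differentiable (by simp)
  obtain ⟨M, hM⟩ := (isCompact_closedBall c R).exists_bound_of_continuousOn
    ((hf.continuous_fderiv (by simp)).continuousOn (s := closedBall c R))
  refine ⟨⟨max M 0, le_max_right _ _⟩, Convex.lipschitzOnWith_of_nnnorm_fderiv_le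
    (fun x _ => hd x) (fun x hx => ?_) (convex_closedBall c R)⟩
  show ‖fderiv ℝ f x‖ ≤ max M 0
  exact (hM x hx).trans (le_max_left _ _)

private lemma hom_aux_unique {E : Type*} [NormedAddCommGroup E] [NormedSpace ℝ E] [ProperSpace E]
    {X : E → E} (hX : ContDiff ℝ (⊤ : ℕ∞) X)
    {γ δ : ℝ → E} (hγ : ∀ t, HasDerivAt γ (X (γ t)) t) (hδ : ∀ t, HasDerivAt δ (X (δ t)) t)
    (h0 : γ 0 = δ 0) (t : ℝ) : γ t = δ t := by
  set T : ℝ := |t| + 1 with hTdef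
  have hT0 : 0 < T := by positivity
  have ht1 : |t| < T := by simp [hTdef]
  have htmem : t ∈ Set.Ioo (-T) T := ⟨neg_lt_of_abs_lt ht1, lt_of_abs_lt ht1⟩
  have hγc : ContinuousOn γ (Set.Icc (-T) T) := fun s _ => (hγ s).continuousAt.continuousWithinAt
  have hδc : ContinuousOn δ (Set.Icc (-T) T) := fun s _ => (hδ s).continuousAt.continuousWithinAt
  obtain ⟨R1, hR1⟩ := (isCompact_Icc (a := -T) (b := T)).exists_bound_of_continuousOn hγc
  obtain ⟨R2, hR2⟩ := (isCompact_Icc (a := -T) (b := T)).exists_bound_of_continuousOn hδc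
  obtain ⟨K, hK⟩ := hom_aux_lip hX (0 : E) (max R1 R2)
  have := ODE_solution_unique_of_mem_Icc (v := fun _ y => X y)
    (s := fun _ => closedBall (0 : E) (max R1 R2)) (K := K)
    (fun _ _ => hK) (t₀ := 0) ⟨neg_neg_iff_pos.2 hT0, hT0⟩ hγc
    (fun u _ => hγ u)
    (fun u hu => mem_closedBall_zero_iff.2 ((hR1 u (Set.Ioo_subset_Icc_self hu)).trans (le_max_left _ _)))
    hδc (fun u _ => hδ u)
    (fun u hu => mem_closedBall_zero_iff.2 ((hR2 u (Set.Ioo_subset_Icc_self hu)).trans (le_max_right _ _)))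
    h0
  exact this (Set.Ioo_subset_Icc_self htmem)

private lemma hom_aux_dist {E : Type*} [NormedAddCommGroup E] [NormedSpace ℝ E]
    {X : E → E} {K : NNReal} {B : Set E} (hXL : LipschitzOnWith K X B)
    {γ δ : ℝ → E} (hγ : ∀ t, HasDerivAt γ (X (γ t)) t) (hδ : ∀ t, HasDerivAt δ (X (δ t)) t)
    (hγB : ∀ t ≤ (0:ℝ), γ t ∈ B) (hδB : ∀ t ≤ (0:ℝ), δ t ∈ B)
    (t : ℝ) (ht : t ≤ 0) :
    dist (γ t) (δ t) ≤ dist (γ 0) (δ 0) * Real.exp (K * (-t)) := by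
  have hXL' : LipschitzOnWith K (fun y => -X y) B := fun x hx y hy => by
    simpa [edist_neg_neg] using hXL hx hy
  have hd : ∀ (φ : ℝ → E), (∀ u, HasDerivAt φ (X (φ u)) u) →
      ∀ u : ℝ, HasDerivAt (fun w => φ (-w)) (-X (φ (-u))) u := by
    intro φ hφ u
    have := (hφ (-u)).scomp u (hasDerivAt_neg u)
    simpa [Function.comp_def] using this
  have key := dist_le_of_trajectories_ODE_of_mem (v := fun _ y => -X y)
    (s := fun _ => B) (K := K) (fun _ _ => hXL')
    (f := fun w => γ (-w)) (g := fun w => δ (-w)) (a := 0) (b := -t)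
    (fun u _ => (hd γ hγ u).continuousAt.continuousWithinAt)
    (fun u _ => (hd γ hγ u).hasDerivWithinAt)
    (fun u hu => hγB (-u) (by simpa using hu.1))
    (fun u _ => (hd δ hδ u).continuousAt.continuousWithinAt)
    (fun u _ => (hd δ hδ u).hasDerivWithinAt)
    (fun u hu => hδB (-u) (by simpa using hu.1))
    (le_refl (dist (γ (-0)) (δ (-0))))
    (-t) ⟨neg_nonneg.2 ht, le_refl _⟩
  simpa using key

/-- Solving the homological equation `X·f = g` along a flow: if `g` is smooth, flat at
the fixed point `ρ₀`, and supported in the region `S` where the backward flow converges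
exponentially to `ρ₀`, then `f(ρ) = ∫_{-∞}^0 g(κ_t(ρ)) dt` converges, is continuous on
the region, vanishes at `ρ₀`, and satisfies `X·f = g`. -/
theorem homological_equation (m : ℕ)
    (X : EuclideanSpace ℝ (Fin m) → EuclideanSpace ℝ (Fin m)) (hX : ContDiff ℝ (⊤ : ℕ∞) X)
    (κ : ℝ → EuclideanSpace ℝ (Fin m) → EuclideanSpace ℝ (Fin m))
    (hκ0 : ∀ ρ, κ 0 ρ = ρ)
    (hκ : ∀ ρ t, HasDerivAt (fun s => κ s ρ) (X (κ t ρ)) t)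
    (ρ₀ : EuclideanSpace ℝ (Fin m)) (hfix : X ρ₀ = 0)
    (C lam : ℝ) (hC : 0 < C) (hlam : 0 < lam)
    (S : Set (EuclideanSpace ℝ (Fin m)))
    (hS : S = {ρ | ∀ t ≤ (0:ℝ), ‖κ t ρ - ρ₀‖ ≤ C * Real.exp (lam * t) * ‖ρ - ρ₀‖})
    (g : EuclideanSpace ℝ (Fin m) → ℝ) (hg : ContDiff ℝ (⊤ : ℕ∞) g)
    (hflat : ∀ k, iteratedFDeriv ℝ k g ρ₀ = 0)
    (hsupp : tsupport g ⊆ S)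
    (f : EuclideanSpace ℝ (Fin m) → ℝ)
    (hf : ∀ ρ, f ρ = ∫ t in Set.Iic (0:ℝ), g (κ t ρ)) :
    (∀ ρ ∈ S, IntegrableOn (fun t => g (κ t ρ)) (Set.Iic 0)) ∧
    ContinuousOn f S ∧ f ρ₀ = 0 ∧
    (∀ ρ ∈ S, HasDerivAt (fun t => f (κ t ρ)) (g ρ) 0) := by
  have hκcont : ∀ ρ, Continuous fun t => κ t ρ :=
    fun ρ => continuous_iff_continuousAt.2 fun t => (hκ ρ t).continuousAt
  have hgc : Continuous g := hg.continuous
  have hGcont : ∀ ρ, Continuous fun t => g (κ t ρ) := fun ρ => hgc.comp (hκcont ρ)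
  -- flatness at order 0
  have hg0 : g ρ₀ = 0 := by
    have h := hflat 0
    have h2 : g ρ₀ = iteratedFDeriv ℝ 0 g ρ₀ 0 := (iteratedFDeriv_zero_apply 0).symm
    rw [h2, h]
    rfl
  -- group law and fixed point
  have hgroup : ∀ ρ s t, κ t (κ s ρ) = κ (t + s) ρ := by
    intro ρ s t
    refine hom_aux_unique (γ := fun t => κ t (κ s ρ)) (δ := fun t => κ (t + s) ρ)
      hX (hκ (κ s ρ)) (fun u => ?_) (by simp [hκ0]) t
    have h1 : HasDerivAt (fun u : ℝ => u + s) 1 u := (hasDerivAt_id u).add_const s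
    have := (hκ ρ (u + s)).scomp u h1
    simpa [Function.comp_def] using this
  have hfixflow : ∀ t, κ t ρ₀ = ρ₀ := by
    intro t
    refine hom_aux_unique (γ := fun t => κ t ρ₀) (δ := fun _ => ρ₀)
      hX (hκ ρ₀) (fun u => ?_) (hκ0 ρ₀) t
    simpa [hfix] using hasDerivAt_const u ρ₀
  -- trajectories stay in balls
  subst hS
  have htraj : ∀ ρ', ρ' ∈ {ρ | ∀ t ≤ (0:ℝ), ‖κ t ρ - ρ₀‖ ≤ C * Real.exp (lam * t) * ‖ρ - ρ₀‖} →
      ∀ R, ‖ρ' - ρ₀‖ ≤ R → ∀ t ≤ (0:ℝ), κ t ρ' ∈ Metric.closedBall ρ₀ (C * R) := by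
    intro ρ' hρ' R hR t ht
    rw [Metric.mem_closedBall, dist_eq_norm]
    have h1 : Real.exp (lam * t) ≤ 1 := Real.exp_le_one_iff.2 (by nlinarith)
    have h0 : (0:ℝ) ≤ ‖ρ' - ρ₀‖ := norm_nonneg _
    have he : (0:ℝ) < Real.exp (lam * t) := Real.exp_pos _
    calc ‖κ t ρ' - ρ₀‖ ≤ C * Real.exp (lam * t) * ‖ρ' - ρ₀‖ := hρ' t ht
      _ ≤ C * 1 * R := mul_le_mul (mul_le_mul le_rfl h1 he.le hC.le) hR h0 (by positivity)
      _ = C * R := by ring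
  -- pointwise bound on g along trajectories
  have key_bd : ∀ ρ', ρ' ∈ {ρ | ∀ t ≤ (0:ℝ), ‖κ t ρ - ρ₀‖ ≤ C * Real.exp (lam * t) * ‖ρ - ρ₀‖} →
      ∀ R, ‖ρ' - ρ₀‖ ≤ R → ∀ L : NNReal, LipschitzOnWith L g (Metric.closedBall ρ₀ (C * R)) →
      ∀ t ≤ (0:ℝ), |g (κ t ρ')| ≤ (L * C * R) * Real.exp (lam * t) := by
    intro ρ' hρ' R hR L hL t ht
    have hR0 : (0:ℝ) ≤ R := (norm_nonneg _).trans hR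
    have hmem := htraj ρ' hρ' R hR t ht
    have hmem0 : ρ₀ ∈ Metric.closedBall ρ₀ (C * R) :=
      Metric.mem_closedBall_self (by positivity)
    have h1 := hL.dist_le_mul _ hmem _ hmem0
    rw [hg0, Real.dist_eq, sub_zero, dist_eq_norm] at h1
    have h2 : ‖κ t ρ' - ρ₀‖ ≤ C * Real.exp (lam * t) * ‖ρ' - ρ₀‖ := hρ' t ht
    have hLpos : (0:ℝ) ≤ (L:ℝ) := L.coe_nonneg
    have he : (0:ℝ) < Real.exp (lam * t) := Real.exp_pos _
    have h0 : (0:ℝ) ≤ ‖ρ' - ρ₀‖ := norm_nonneg _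
    have h4 : (L:ℝ) * ‖κ t ρ' - ρ₀‖ ≤ (L:ℝ) * (C * Real.exp (lam * t) * R) := by
      refine mul_le_mul_of_nonneg_left (h2.trans ?_) hLpos
      exact mul_le_mul_of_nonneg_left hR (by positivity)
    calc |g (κ t ρ')| ≤ (L:ℝ) * ‖κ t ρ' - ρ₀‖ := h1
      _ ≤ (L:ℝ) * (C * Real.exp (lam * t) * R) := h4
      _ = ((L:ℝ) * C * R) * Real.exp (lam * t) := by ring
  -- integrability of the exponential bound
  have hexp_int : IntegrableOn (fun t => Real.exp (lam * t)) (Set.Iic 0) := by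
    have h1 : Integrable ((Set.Iic (0:ℝ)).indicator Real.exp) :=
      (integrable_indicator_iff measurableSet_Iic).2 (integrableOn_exp_Iic 0)
    have h2 := (integrable_comp_mul_left_iff ((Set.Iic (0:ℝ)).indicator Real.exp)
      (ne_of_gt hlam)).2 h1
    have heq : (Set.Iic (0:ℝ)).indicator (fun t => Real.exp (lam * t))
        = fun t => (Set.Iic (0:ℝ)).indicator Real.exp (lam * t) := by
      funext t
      by_cases h : t ≤ 0
      · have h' : lam * t ≤ 0 := by nlinarith
        simp [Set.indicator_apply, Set.mem_Iic, h, h']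
      · have h' : ¬ lam * t ≤ 0 := by
          simp only [not_le] at h ⊢
          positivity
        simp [Set.indicator_apply, Set.mem_Iic, h, h']
    rw [← heq] at h2
    exact (integrable_indicator_iff measurableSet_Iic).1 h2
  -- main integrability
  have hInt : ∀ ρ', ρ' ∈ {ρ | ∀ t ≤ (0:ℝ), ‖κ t ρ - ρ₀‖ ≤ C * Real.exp (lam * t) * ‖ρ - ρ₀‖} →
      IntegrableOn (fun t => g (κ t ρ')) (Set.Iic 0) := by
    intro ρ' hρ'
    obtain ⟨L, hL⟩ := hom_aux_lip hg ρ₀ (C * ‖ρ' - ρ₀‖)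
    have hb := key_bd ρ' hρ' ‖ρ' - ρ₀‖ le_rfl L hL
    refine Integrable.mono' (hexp_int.const_mul ((L : ℝ) * C * ‖ρ' - ρ₀‖))
      ((hGcont ρ').aestronglyMeasurable.restrict) ?_
    filter_upwards [ae_restrict_mem measurableSet_Iic] with t ht
    simpa [Real.norm_eq_abs] using hb t ht
  have hIntIic : ∀ ρ', ρ' ∈ {ρ | ∀ t ≤ (0:ℝ), ‖κ t ρ - ρ₀‖ ≤ C * Real.exp (lam * t) * ‖ρ - ρ₀‖} →
      ∀ s : ℝ, IntegrableOn (fun t => g (κ t ρ')) (Set.Iic s) := by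
    intro ρ' hρ' s
    rcases le_or_gt s 0 with h | h
    · exact (hInt ρ' hρ').mono_set (Set.Iic_subset_Iic.2 h)
    · rw [← Set.Iic_union_Ioc_eq_Iic h.le]
      exact (hInt ρ' hρ').union ((hGcont ρ').integrableOn_Ioc)
  -- shift identity
  have hshift : ∀ (F : ℝ → ℝ) (s : ℝ),
      (∫ t in Set.Iic (0:ℝ), F (t + s)) = ∫ u in Set.Iic s, F u := by
    intro F s
    have h1 : ∀ t : ℝ, (Set.Iic (0:ℝ)).indicator (fun t => F (t + s)) t
        = (Set.Iic s).indicator F (t + s) := by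
      intro t
      by_cases h : t ≤ 0
      · have h' : t + s ≤ s := by linarith
        simp [Set.indicator_apply, Set.mem_Iic, h, h']
      · have h' : ¬ t + s ≤ s := fun hc => h (by linarith)
        simp [Set.indicator_apply, Set.mem_Iic, h, h']
    rw [← integral_indicator measurableSet_Iic, ← integral_indicator measurableSet_Iic]
    simp_rw [h1]
    exact integral_add_right_eq_self ((Set.Iic s).indicator F) s
  -- value at the fixed point
  have hfρ₀ : f ρ₀ = 0 := by
    rw [hf]
    have h : ∀ t : ℝ, g (κ t ρ₀) = 0 := fun t => by rw [hfixflow t, hg0]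
    simp only [h, integral_zero]
  refine ⟨fun ρ hρ => hInt ρ hρ, ?_, hfρ₀, ?_⟩
  · -- continuity
    intro ρ hρ
    set R : ℝ := ‖ρ - ρ₀‖ + 1 with hRdef
    have hRpos : 0 < R := by positivity
    obtain ⟨K, hK⟩ := hom_aux_lip hX ρ₀ (C * R)
    obtain ⟨L, hL⟩ := hom_aux_lip hg ρ₀ (C * R)
    set S' : Set (EuclideanSpace ℝ (Fin m)) :=
      {ρ | ∀ t ≤ (0:ℝ), ‖κ t ρ - ρ₀‖ ≤ C * Real.exp (lam * t) * ‖ρ - ρ₀‖} with hS'def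
    have hρV : ρ ∈ Metric.ball ρ₀ R := by
      rw [Metric.mem_ball, dist_eq_norm]; simp [hRdef]
    have hUV : S' ∩ Metric.ball ρ₀ R ∈ nhdsWithin ρ S' :=
      Filter.inter_mem self_mem_nhdsWithin
        (mem_nhdsWithin_of_mem_nhds (Metric.isOpen_ball.mem_nhds hρV))
    have hnorm : ∀ x ∈ S' ∩ Metric.ball ρ₀ R, ‖x - ρ₀‖ ≤ R := by
      intro x hx
      have := hx.2
      rw [Metric.mem_ball, dist_eq_norm] at this
      exact this.le
    have hfeq : f = fun x => ∫ t in Set.Iic (0:ℝ), g (κ t x) := funext hf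
    rw [hfeq]
    refine MeasureTheory.continuousWithinAt_of_dominated
      (bound := fun t => ((L : ℝ) * C * R) * Real.exp (lam * t))
      (Filter.Eventually.of_forall fun x => ((hGcont x).aestronglyMeasurable.restrict)) ?_
      (hexp_int.const_mul _) ?_
    · filter_upwards [hUV] with x hx
      filter_upwards [ae_restrict_mem measurableSet_Iic] with t ht
      simpa [Real.norm_eq_abs] using key_bd x hx.1 R (hnorm x hx) L hL t ht
    · filter_upwards [ae_restrict_mem measurableSet_Iic] with t ht
      have hlip : LipschitzOnWith (Real.exp ((K : ℝ) * (-t))).toNNReal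
          (fun x => κ t x) (S' ∩ Metric.ball ρ₀ R) := by
        refine LipschitzOnWith.of_dist_le_mul fun x hx y hy => ?_
        have := hom_aux_dist hK (hκ x) (hκ y)
          (fun u hu => htraj x hx.1 R (hnorm x hx) u hu)
          (fun u hu => htraj y hy.1 R (hnorm y hy) u hu) t ht
        rw [hκ0, hκ0] at this
        rw [Real.coe_toNNReal _ (Real.exp_pos _).le, mul_comm]
        exact this
      have hcw : ContinuousWithinAt (fun x => κ t x) (S' ∩ Metric.ball ρ₀ R) ρ :=
        hlip.continuousOn ρ ⟨hρ, hρV⟩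
      exact (hgc.continuousAt.comp_continuousWithinAt
        (hcw.mono_of_mem_nhdsWithin hUV))
  · -- derivative along the flow
    intro ρ' hρ'
    have hG := hGcont ρ'
    have heq : (fun s => f (κ s ρ'))
        = fun s => (∫ t in Set.Iic (0:ℝ), g (κ t ρ')) + ∫ u in (0:ℝ)..s, g (κ u ρ') := by
      funext s
      rw [hf]
      have h1 : (fun t => g (κ t (κ s ρ'))) = fun t => g (κ (t + s) ρ') := by
        funext t; rw [hgroup ρ' s t]
      calc (∫ t in Set.Iic (0:ℝ), g (κ t (κ s ρ')))
          = ∫ t in Set.Iic (0:ℝ), g (κ (t + s) ρ') := by rw [h1]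
        _ = ∫ u in Set.Iic s, g (κ u ρ') := hshift (fun u => g (κ u ρ')) s
        _ = (∫ t in Set.Iic (0:ℝ), g (κ t ρ')) + ∫ u in (0:ℝ)..s, g (κ u ρ') := by
            have h2 := intervalIntegral.integral_Iic_sub_Iic (hInt ρ' hρ') (hIntIic ρ' hρ' s)
            linarith
    rw [heq]
    have h3 : HasDerivAt (fun s => ∫ u in (0:ℝ)..s, g (κ u ρ')) (g (κ 0 ρ')) 0 :=
      intervalIntegral.integral_hasDerivAt_right (hG.intervalIntegrable 0 0)
        (hG.stronglyMeasurableAtFilter _ _) hG.continuousAt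
    rw [hκ0] at h3
    exact h3.const_add _
end

section
/- Let f_s (0 ≤ s ≤ 1) be a family of smooth functions on ℝᵐ, smooth in all variables, all vanishing to infinite order at 0, with uniformly bounded C¹ norms, and let κ_s solve ∂_s κ_s = V_s(κ_s), κ₀ = id, where V_s = ∇f_s (or any smooth vector field vanishing to infinite order at 0). Assume ‖κ_s(ρ)‖ ≤ C‖ρ‖ for ‖ρ‖ < δ and all s ∈ [0,1]. Then κ_s' := κ_s - id vanishes to infinite order at 0: for every N there is C_N with ‖κ_s(ρ) - ρ‖ ≤ C_N‖ρ‖^N for ‖ρ‖ < δ, uniformly in s. -/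
open Set

/-- A smooth family of functions flat at `0` satisfies, uniformly in the parameter,
a bound `‖W s x‖ ≤ K ‖x‖^N` on any ball. -/
lemma flat_family_bound (m : ℕ) (R : ℝ) (N : ℕ) :
    ∀ (F : Type) (_ : NormedAddCommGroup F) (_ : NormedSpace ℝ F)
      (W : ℝ → EuclideanSpace ℝ (Fin m) → F),
      ContDiff ℝ (⊤ : ℕ∞) (Function.uncurry W) →
      (∀ s ∈ Icc (0:ℝ) 1, ∀ k, iteratedFDeriv ℝ k (W s) 0 = 0) →
      ∃ K : ℝ, 0 ≤ K ∧ ∀ s ∈ Icc (0:ℝ) 1, ∀ x : EuclideanSpace ℝ (Fin m),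
        ‖x‖ ≤ R → ‖W s x‖ ≤ K * ‖x‖ ^ N := by
  induction N with
  | zero =>
    intro F _ _ W hW _
    obtain ⟨K, hK⟩ := (isCompact_Icc.prod (isCompact_closedBall (0 : EuclideanSpace ℝ (Fin m)) R)).exists_bound_of_continuousOn
      (hW.continuous.continuousOn)
    refine ⟨max K 0, le_max_right _ _, fun s hs x hx => ?_⟩
    simp only [pow_zero, mul_one]
    exact le_trans (hK (s, x) ⟨hs, by simpa [Metric.mem_closedBall, dist_eq_norm] using hx⟩)
      (le_max_left _ _)
  | succ N ih =>
    intro F _ _ W hW hflat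
    have hWs : ∀ s, ContDiff ℝ (⊤ : ℕ∞) (W s) := fun s =>
      hW.comp (contDiff_const.prodMk contDiff_id)
    set W' : ℝ → EuclideanSpace ℝ (Fin m) → (EuclideanSpace ℝ (Fin m) →L[ℝ] F) :=
      fun s x => fderiv ℝ (W s) x with hW'def
    have hfd : ∀ s x, fderiv ℝ (W s) x =
        (fderiv ℝ (Function.uncurry W) (s, x)).comp
          (ContinuousLinearMap.inr ℝ ℝ (EuclideanSpace ℝ (Fin m))) := by
      intro s x
      have h1 : HasFDerivAt (Function.uncurry W) (fderiv ℝ (Function.uncurry W) (s, x)) (s, x) :=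
        (hW.differentiable (by simp) (s, x)).hasFDerivAt
      have h2 := h1.comp x (hasFDerivAt_prodMk_right s x)
      exact h2.fderiv
    have hW' : ContDiff ℝ (⊤ : ℕ∞) (Function.uncurry W') := by
      have : Function.uncurry W' = fun p : ℝ × EuclideanSpace ℝ (Fin m) =>
          (fderiv ℝ (Function.uncurry W) p).comp
            (ContinuousLinearMap.inr ℝ ℝ (EuclideanSpace ℝ (Fin m))) := by
        funext p
        exact hfd p.1 p.2
      rw [this]
      exact (hW.fderiv_right (by simp)).clm_comp contDiff_const
    have hflat' : ∀ s ∈ Icc (0:ℝ) 1, ∀ k, iteratedFDeriv ℝ k (W' s) 0 = 0 := by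
      intro s hs k
      have := hflat s hs (k + 1)
      rw [← norm_eq_zero]
      show ‖iteratedFDeriv ℝ k (fderiv ℝ (W s)) 0‖ = 0
      rw [norm_iteratedFDeriv_fderiv, this, norm_zero]
    obtain ⟨K, hK0, hK⟩ := ih (EuclideanSpace ℝ (Fin m) →L[ℝ] F)
      (inferInstance : NormedAddCommGroup (EuclideanSpace ℝ (Fin m) →L[ℝ] F))
      (inferInstance : NormedSpace ℝ (EuclideanSpace ℝ (Fin m) →L[ℝ] F)) W' hW' hflat'
    refine ⟨K, hK0, fun s hs x hx => ?_⟩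
    have hW0 : W s 0 = 0 := by
      have := hflat s hs 0
      rw [← norm_eq_zero, ← norm_iteratedFDeriv_zero (𝕜 := ℝ), this, norm_zero]
    have key : ‖W s x - W s 0‖ ≤ (K * ‖x‖ ^ N) * ‖x - 0‖ := by
      apply Convex.norm_image_sub_le_of_norm_fderiv_le
        (fun y _ => ((hWs s).differentiable (by simp)).differentiableAt)
        (fun y hy => ?_) (convex_closedBall 0 ‖x‖)
        (by simp [Metric.mem_closedBall]) (by simp [Metric.mem_closedBall])
      have hyx : ‖y‖ ≤ ‖x‖ := by simpa [Metric.mem_closedBall, dist_eq_norm] using hy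
      calc ‖fderiv ℝ (W s) y‖ ≤ K * ‖y‖ ^ N := hK s hs y (hyx.trans hx)
        _ ≤ K * ‖x‖ ^ N :=
          mul_le_mul_of_nonneg_left (pow_le_pow_left₀ (norm_nonneg _) hyx N) hK0
    rw [hW0, sub_zero, sub_zero] at key
    calc ‖W s x‖ ≤ K * ‖x‖ ^ N * ‖x‖ := key
      _ = K * ‖x‖ ^ (N + 1) := by ring

/-- If `κ_s` is the flow of a time-dependent smooth vector field `V_s` vanishing to
infinite order at `0`, with the a priori bound `‖κ_s(ρ)‖ ≤ C‖ρ‖`, then `κ_s - id`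
vanishes to infinite order at `0`, uniformly in `s ∈ [0,1]`. -/
theorem flow_of_flat_field_is_flat (m : ℕ) (δ C : ℝ) (hδ : 0 < δ) (hC : 0 < C)
    (V : ℝ → EuclideanSpace ℝ (Fin m) → EuclideanSpace ℝ (Fin m))
    (hV : ContDiff ℝ (⊤ : ℕ∞) (Function.uncurry V))
    (hVflat : ∀ s ∈ Icc (0:ℝ) 1, ∀ k, iteratedFDeriv ℝ k (V s) 0 = 0)
    (κ : ℝ → EuclideanSpace ℝ (Fin m) → EuclideanSpace ℝ (Fin m))
    (hκ0 : ∀ ρ, κ 0 ρ = ρ)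
    (hκ : ∀ ρ, ‖ρ‖ < δ → ∀ s ∈ Icc (0:ℝ) 1,
      HasDerivAt (fun u => κ u ρ) (V s (κ s ρ)) s)
    (hbound : ∀ s ∈ Icc (0:ℝ) 1, ∀ ρ : EuclideanSpace ℝ (Fin m),
      ‖ρ‖ < δ → ‖κ s ρ‖ ≤ C * ‖ρ‖) :
    ∀ N : ℕ, ∃ C_N : ℝ, ∀ s ∈ Icc (0:ℝ) 1, ∀ ρ : EuclideanSpace ℝ (Fin m),
      ‖ρ‖ < δ → ‖κ s ρ - ρ‖ ≤ C_N * ‖ρ‖ ^ N := by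
  intro N
  obtain ⟨K, hK0, hK⟩ := flat_family_bound m (C * δ) N _ _ _ V hV hVflat
  refine ⟨K * C ^ N, fun s hs ρ hρ => ?_⟩
  have hderbound : ∀ u ∈ Icc (0:ℝ) 1, ‖V u (κ u ρ)‖ ≤ K * C ^ N * ‖ρ‖ ^ N := by
    intro u hu
    have h1 : ‖κ u ρ‖ ≤ C * δ :=
      (hbound u hu ρ hρ).trans (by nlinarith [hρ, hC.le])
    calc ‖V u (κ u ρ)‖ ≤ K * ‖κ u ρ‖ ^ N := hK u hu _ h1
      _ ≤ K * (C * ‖ρ‖) ^ N :=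
        mul_le_mul_of_nonneg_left
          (pow_le_pow_left₀ (norm_nonneg _) (hbound u hu ρ hρ) N) hK0
      _ = K * C ^ N * ‖ρ‖ ^ N := by ring
  have key : ‖κ s ρ - κ 0 ρ‖ ≤ (K * C ^ N * ‖ρ‖ ^ N) * ‖s - 0‖ := by
    apply Convex.norm_image_sub_le_of_norm_hasDerivWithin_le
      (fun u hu => (hκ ρ hρ u hu).hasDerivWithinAt)
      (fun u hu => hderbound u hu) (convex_Icc 0 1)
      (by constructor <;> norm_num) hs
  rw [hκ0 ρ] at key
  have hs1 : ‖s - 0‖ ≤ 1 := by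
    rw [sub_zero, Real.norm_eq_abs, abs_of_nonneg hs.1]
    exact hs.2
  calc ‖κ s ρ - ρ‖ ≤ (K * C ^ N * ‖ρ‖ ^ N) * ‖s - 0‖ := key
    _ ≤ (K * C ^ N * ‖ρ‖ ^ N) * 1 := by
        apply mul_le_mul_of_nonneg_left hs1
        positivity
    _ = K * C ^ N * ‖ρ‖ ^ N := mul_one _
end
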